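/- Let X₃ be the 3-element tribracket on {1,2,3} with operation [a,b,c] given by the 3-tensor (matrices indexed by a, rows by b, columns by c): a=1: [[1,3,2],[3,2,1],[2,1,3]]; a=2: [[3,2,1],[2,1,3],[1,3,2]]; a=3: [[2,1,3],[3,2,1],[1,3,2]]. The number of tuples (a,b,c,d,e,f,g,h) ∈ X₃⁸ satisfying d = [a,c,b], d = [e,b,c], f = [e,c,b], f = [a,c,c], f = [g,c,b], h = [g,b,c], h = [a,c,b] is NOT equal to the number of tuples (a,b,c,d,e,f,g,h) ∈ X₃⁸ satisfying [d,b,c] = a, [d,c,b] = e, [f,b,c] = e, [f,c,c] = a, [f,b,c] = g, [h,c,b] = g, [h,b,c] = a. (These are the coloring counts of the 2-knot 9₁ and its reverse -9₁; their inequality is the computation proving that 9₁ is non-invertible.) -/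
import Mathlib
set_option maxRecDepth 100000
set_option maxHeartbeats 2000000


/-- The 3-element tribracket on `{1,2,3}` (encoded as `Fin 3`, with element `i ∈ {1,2,3}`
represented by `i - 1 : Fin 3`), given by the 3-tensor
a=1: [[1,3,2],[3,2,1],[2,1,3]]; a=2: [[3,2,1],[2,1,3],[1,3,2]]; a=3: [[2,1,3],[3,2,1],[1,3,2]]. -/
def t3 : Fin 3 → Fin 3 → Fin 3 → Fin 3 :=
  ![![![0,2,1],![2,1,0],![1,0,2]],
    ![![2,1,0],![1,0,2],![0,2,1]],
    ![![1,0,2],![2,1,0],![0,2,1]]]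

/-- The coloring counts of 9₁ and -9₁ in X₃ differ: 9₁ is non-invertible. -/
theorem col_X3_9_1_ne_neg :
    Nat.card {t : Fin 3 × Fin 3 × Fin 3 × Fin 3 × Fin 3 × Fin 3 × Fin 3 × Fin 3 //
      match t with
      | (a, b, c, d, e, f, g, h) =>
        d = t3 a c b ∧ d = t3 e b c ∧ f = t3 e c b ∧ f = t3 a c c ∧
        f = t3 g c b ∧ h = t3 g b c ∧ h = t3 a c b} ≠
    Nat.card {t : Fin 3 × Fin 3 × Fin 3 × Fin 3 × Fin 3 × Fin 3 × Fin 3 × Fin 3 //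
      match t with
      | (a, b, c, d, e, f, g, h) =>
        t3 d b c = a ∧ t3 d c b = e ∧ t3 f b c = e ∧ t3 f c c = a ∧
        t3 f b c = g ∧ t3 h c b = g ∧ t3 h b c = a} := by
  simp only [Nat.card_eq_fintype_card]
  decide
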